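/- arXiv:2304.05285 — 2 statements merged into one kernel-verified Lean document; each statement's English description precedes it below -/
import Mathlib

section
/- Let h be the Hessenberg function of a skew shape μ/ν with no empty rows, fix k ≥ 0, and let θ = (N-k, 1,...,1) be the hook partition of N = |μ/ν| with k ones. For every w ∈ S_n, the Kostka number K_{θ, μ+δ-w(ν+δ)} equals the number of size-k subsets J ⊆ [n-1] such that w(i) ≤ h^J(i) for all i ∈ [n], where h^J(i) = h(i)-1 if i ∈ J and μ_{h(i)} - ν_i + i - h(i) = 0, and h^J(i) = h(i) otherwise. -/
open Equiv

/-- `T i j` is the entry of a filling in row `i`, column `j` (0-based);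
entries outside the diagram of `shape` are `0`.  Rows weakly increase,
columns strictly increase. -/
def IsSSYT (shape : ℕ → ℕ) (T : ℕ → ℕ → ℕ) : Prop :=
  (∀ i j, j + 1 < shape i → T i j ≤ T i (j + 1)) ∧
  (∀ i j, j < shape (i + 1) → T i j < T (i + 1) j) ∧
  (∀ i j, shape i ≤ j → T i j = 0)

/-- The Kostka number: the number of semistandard Young tableaux of the given
shape in which the entry `m` appears exactly `c m` times. -/
noncomputable def kostka (shape : ℕ → ℕ) (c : ℕ → ℕ) : ℕ :=
  Set.ncard {T : ℕ → ℕ → ℕ | IsSSYT shape T ∧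
    ∀ m : ℕ, {p : ℕ × ℕ | p.2 < shape p.1 ∧ T p.1 p.2 = m}.ncard = c m}

open Classical in
/-- Kostka number for an integer content, with the convention that it is `0`
whenever the content has a negative entry. -/
noncomputable def kostkaZ (shape : ℕ → ℕ) (c : ℕ → ℤ) : ℕ :=
  if ∀ m, 0 ≤ c m then kostka shape (fun m => (c m).toNat) else 0

/-- The hook shape `(N - k, 1, ..., 1)` with `k` trailing rows of length 1. -/
def hookShape (N k : ℕ) : ℕ → ℕ :=
  fun i => if i = 0 then N - k else if i ≤ k then 1 else 0

/-- Extend a sequence indexed by `Fin n` to all of `ℕ` by zeros. -/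
def extendSeq {n : ℕ} (a : Fin n → ℤ) : ℕ → ℤ :=
  fun m => if h : m < n then a ⟨m, h⟩ else 0

/-- The staircase `δ = (n-1, n-2, ..., 1, 0)`. -/
def deltaSeq (n : ℕ) : Fin n → ℤ := fun i => (n : ℤ) - 1 - (i.val : ℤ)

/-- The sequence `μ + δ - w(ν + δ)`, where a permutation acts on sequences by
shuffling: `(w(a))_i = a_{w⁻¹(i)}`. -/
def hatSeq {n : ℕ} (μ ν : Fin n → ℕ) (w : Perm (Fin n)) : Fin n → ℤ :=
  fun i => ((μ i : ℤ) + deltaSeq n i) - ((ν (w⁻¹ i) : ℤ) + deltaSeq n (w⁻¹ i))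

/-- `h` is the Hessenberg function of the skew shape `μ/ν`:
`h j = max { i | μ i - ν j + j - i ≥ 0 }`. -/
def IsHessOf {n : ℕ} (μ ν : Fin n → ℕ) (h : Fin n → Fin n) : Prop :=
  ∀ j : Fin n, (ν j + ((h j : ℕ)) ≤ μ (h j) + (j : ℕ)) ∧
    ∀ i : Fin n, ν j + (i : ℕ) ≤ μ i + (j : ℕ) → i ≤ h j

/-- The indicator `ĥ(w)` of the condition `w(i) ≤ h(i)` for all `i`. -/
def hhat {n : ℕ} (h : Fin n → Fin n) (w : Perm (Fin n)) : ℕ :=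
  if ∀ i, w i ≤ h i then 1 else 0

/-- The modified Hessenberg function `h^J`: `h^J(i) = h(i) - 1` when `i ∈ J` and
`μ_{h(i)} - ν_i + i - h(i) = 0`, and `h^J(i) = h(i)` otherwise. -/
def hJfun {n : ℕ} (μ ν : Fin n → ℕ) (h : Fin n → Fin n) (J : Finset (Fin n)) :
    Fin n → Fin n :=
  fun i => if i ∈ J ∧ μ (h i) + (i : ℕ) = ν i + ((h i : ℕ)) then
      ⟨(h i : ℕ) - 1, Nat.lt_of_le_of_lt (Nat.sub_le _ _) (h i).isLt⟩
    else h i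

open Classical in
/-- The conjugacy class of `w` in the symmetric group, as a finset. -/
noncomputable def conjClass {n : ℕ} (w : Perm (Fin n)) : Finset (Perm (Fin n)) :=
  Finset.univ.filter (fun v => IsConj w v)

/-- The Stanley–Stembridge character
`Γ_h(w) = (n! / |C(w)|) · Σ_{w' ∈ C(w)} ĥ(w')`. -/
noncomputable def GammaH {n : ℕ} (h : Fin n → Fin n) (w : Perm (Fin n)) : ℚ :=
  ((n.factorial : ℚ) / ((conjClass w).card : ℚ)) * ∑ v ∈ conjClass w, (hhat h v : ℚ)

/-- The immanant character
`Γ^θ_{μ/ν}(w) = (n! / |C(w)|) · Σ_{w' ∈ C(w)} K_{θ, μ+δ-w'(ν+δ)}`. -/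
noncomputable def GammaTheta {n : ℕ} (shape : ℕ → ℕ) (μ ν : Fin n → ℕ)
    (w : Perm (Fin n)) : ℚ :=
  ((n.factorial : ℚ) / ((conjClass w).card : ℚ)) *
    ∑ v ∈ conjClass w, (kostkaZ shape (extendSeq (hatSeq μ ν v)) : ℚ)

/-!
A semistandard tableau of hook shape `(N - k, 1^k)` is determined by its leg: the corner holds
the smallest entry `m₀` of the content, the leg is a strictly increasing list of `k` values other
than `m₀`, and the first row lists the remaining entries in weakly increasing order. Conversely
every `k`-subset of the distinct values other than `m₀` is the leg of such a tableau, so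
`K_{θ,c} = C(r - 1, k)` where `r` is the number of distinct values of the content.

For `c = μ + δ - w(ν + δ)` the entry at position `w(j)` is `μ_{w(j)} - ν_j + j - w(j)`. By the
defining property of `h` (and `μ` decreasing) it is nonnegative iff `w(j) ≤ h(j)`, and it
vanishes iff moreover `w(j) = h(j)` and `j` is tight. A set `J` passes the test `w ≤ h^J` iff
it avoids the `b` positions `j` where this happens, all of which lie in `[n-1]`; hence both sides
equal `C(n - 1 - b, k)`, and both vanish when `w ≤ h` fails.
-/

open Finset

section HookTableau

variable {N k : ℕ} {T : ℕ → ℕ → ℕ}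

def hookRow (N k : ℕ) (T : ℕ → ℕ → ℕ) : List ℕ :=
  List.ofFn fun j : Fin (N - k) => T 0 j

def hookCol (k : ℕ) (T : ℕ → ℕ → ℕ) : List ℕ := List.ofFn fun i : Fin (k + 1) => T i 0

def hookLeg (k : ℕ) (T : ℕ → ℕ → ℕ) : List ℕ := List.ofFn fun i : Fin k => T (i + 1) 0

def hookContent (N k : ℕ) (T : ℕ → ℕ → ℕ) : Multiset ℕ := hookRow N k T + hookLeg k T

def hookTableau (row leg : List ℕ) : ℕ → ℕ → ℕ := fun i j =>
  if i = 0 then row.getD j 0 else if j = 0 then leg.getD (i - 1) 0 else 0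

lemma hookCol_eq_cons (k : ℕ) (T : ℕ → ℕ → ℕ) : hookCol k T = T 0 0 :: hookLeg k T := by
  simp [hookCol, hookLeg, List.ofFn_succ]

lemma hookShape_succ (N k i : ℕ) : hookShape N k (i + 1) = if i < k then 1 else 0 := by
  simp [hookShape]

lemma isSSYT_hookShape_iff :
    IsSSYT (hookShape N k) T ↔ (hookRow N k T).SortedLE ∧ (hookCol k T).SortedLT ∧
      ∀ i j, hookShape N k i ≤ j → T i j = 0 := by
  simp only [IsSSYT, hookRow, hookCol, List.sortedLE_iff_isChain, List.sortedLT_iff_isChain,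
    List.isChain_ofFn]
  refine and_congr ⟨fun H j hj => H 0 j hj, fun H i j hj => ?_⟩
    (and_congr_left' ⟨fun H i hi => H i 0 (by simp only [hookShape_succ]; split_ifs <;> omega),
      fun H i j hj => ?_⟩)
  · rcases i with _ | i
    · exact H j hj
    · rw [hookShape_succ] at hj; split_ifs at hj <;> omega
  · rw [hookShape_succ] at hj
    split_ifs at hj with hi
    · obtain rfl : j = 0 := by omega
      exact H i (by omega)
    · omega

lemma count_coe_ofFn {α : Type*} [DecidableEq α] {L : ℕ} (f : Fin L → α) (a : α) :
    Multiset.count a (List.ofFn f : Multiset α) = ∑ j, if f j = a then 1 else 0 := by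
  rw [← Fin.univ_val_map, Multiset.count_map, ← filter_val, card_val, card_filter]
  simp [eq_comm]

lemma ncard_hookShape_cells_eq_count (N k : ℕ) (T : ℕ → ℕ → ℕ) (m : ℕ) :
    {p : ℕ × ℕ | p.2 < hookShape N k p.1 ∧ T p.1 p.2 = m}.ncard =
      (hookContent N k T).count m := by
  let cell : Fin (N - k) ⊕ Fin k → ℕ × ℕ :=
    Sum.elim (fun j => (0, j)) (fun i => (i + 1, 0))
  have hcell : Function.Injective cell := by
    rintro (a | a) (b | b) hab <;> simp [cell, Fin.val_inj] at hab ⊢ <;> omega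
  have hcells : {p : ℕ × ℕ | p.2 < hookShape N k p.1 ∧ T p.1 p.2 = m} =
      cell '' {x | T (cell x).1 (cell x).2 = m} := by
    ext ⟨i, j⟩
    simp only [Set.mem_ofPred_eq, Set.mem_image]
    constructor
    · rintro ⟨hj, rfl⟩
      rcases i with _ | i
      · exact ⟨.inl ⟨j, by simpa [hookShape] using hj⟩, rfl, rfl⟩
      · rw [hookShape_succ] at hj
        split_ifs at hj with hi
        · obtain rfl : j = 0 := by omega
          exact ⟨.inr ⟨i, hi⟩, rfl, rfl⟩
        · omega
    · rintro ⟨x | x, hx, hxij⟩ <;>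
        simp only [cell, Sum.elim_inl, Sum.elim_inr, Prod.mk.injEq] at hx hxij <;>
        obtain ⟨rfl, rfl⟩ := hxij
      · simp [hookShape, hx]
      · simp [hookShape_succ, hx]
  rw [hcells, Set.ncard_image_of_injective _ hcell, Set.ncard_eq_toFinset_card',
    Set.toFinset_ofPred, card_filter, Fintype.sum_sum_type, hookContent, Multiset.count_add,
    hookRow, hookLeg, count_coe_ofFn, count_coe_ofFn]
  rfl

lemma hookTableau_hookRow_hookLeg (hT : ∀ i j, hookShape N k i ≤ j → T i j = 0) :
    hookTableau (hookRow N k T) (hookLeg k T) = T := by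
  funext i j
  rcases i with _ | i
  · by_cases hj : j < N - k
    · simp [hookTableau, hookRow, hj]
    · simp [hookTableau, hookRow, hj, hT 0 j (by simp [hookShape]; omega)]
  · rcases j with _ | j
    · by_cases hi : i < k
      · simp [hookTableau, hookLeg, hi]
      · simp [hookTableau, hookLeg, hi, hT (i + 1) 0 (by simp [hookShape_succ, hi])]
    · simp [hookTableau, hT (i + 1) (j + 1) (by rw [hookShape_succ]; split_ifs <;> omega)]

variable {row leg : List ℕ}

lemma hookRow_hookTableau (hrow : row.length = N - k) :
    hookRow N k (hookTableau row leg) = row := by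
  apply List.ext_getElem (by simp [hookRow, hrow])
  intro j _ h₂
  simp [hookRow, hookTableau, List.getElem?_eq_getElem h₂]

lemma hookLeg_hookTableau (hleg : leg.length = k) :
    hookLeg k (hookTableau row leg) = leg := by
  apply List.ext_getElem (by simp [hookLeg, hleg])
  intro i _ h₂
  simp [hookLeg, hookTableau, List.getElem?_eq_getElem h₂]

lemma hookTableau_eq_zero_of_hookShape_le (hrow : row.length = N - k) (hleg : leg.length = k)
    {i j : ℕ} (hij : hookShape N k i ≤ j) : hookTableau row leg i j = 0 := by
  rcases i with _ | i
  · simp [hookTableau, hookShape] at hij ⊢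
    simp [List.getElem?_eq_none (by omega : row.length ≤ j)]
  · rw [hookShape_succ] at hij
    rcases j with _ | j
    · simp [hookTableau, List.getElem?_eq_none (by grind : leg.length ≤ i)]
    · simp [hookTableau]

end HookTableau

section KostkaHook

variable {M : Multiset ℕ} {k m₀ : ℕ}

lemma List.SortedLE.getD_zero_le {α : Type*} [Preorder α] {l : List α} (hl : l.SortedLE)
    {a d : α} (ha : a ∈ l) : l.getD 0 d ≤ a := by
  cases l with
  | nil => simp at ha
  | cons b l =>
    rcases List.mem_cons.mp ha with rfl | ha
    · exact le_rfl
    · exact List.rel_of_pairwise_cons hl.pairwise ha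

lemma isSSYT_hookTableau (hm₀ : m₀ ∈ M) (hmin : ∀ m ∈ M, m₀ ≤ m) {S : Finset ℕ}
    (hS : S ∈ powersetCard k (M.toFinset.erase m₀)) :
    IsSSYT (hookShape (Multiset.card M) k) (hookTableau (M - S.val).sort S.sort) ∧
      hookContent (Multiset.card M) k (hookTableau (M - S.val).sort S.sort) = M := by
  obtain ⟨hSsub, rfl⟩ := mem_powersetCard.mp hS
  have hSM : S.val ≤ M := (Multiset.le_iff_subset S.nodup).mpr fun s hs =>
    Multiset.mem_toFinset.mp (mem_of_mem_erase (hSsub hs))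
  have hrow : ((M - S.val).sort).length = Multiset.card M - S.card := by
    rw [Multiset.length_sort, Multiset.card_sub hSM, card_val]
  have hleg : (S.sort).length = S.card := length_sort _
  have hm₀row : m₀ ∈ (M - S.val).sort := by
    have : m₀ ∉ S := fun h => (ne_of_mem_erase (hSsub h)) rfl
    rw [Multiset.mem_sort, ← Multiset.count_pos, Multiset.count_sub,
      Multiset.count_eq_zero.mpr this, Nat.sub_zero]
    exact Multiset.count_pos.mpr hm₀
  have hcol : (hookCol S.card (hookTableau (M - S.val).sort S.sort)).SortedLT := by
    rw [hookCol_eq_cons, hookLeg_hookTableau hleg, List.sortedLT_iff_pairwise,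
      List.pairwise_cons]
    refine ⟨fun s hs => ?_, (sortedLT_sort S).pairwise⟩
    obtain ⟨hsm₀, hsM⟩ := mem_erase.mp (hSsub ((mem_sort _).mp hs))
    have hcorner : ((M - S.val).sort).getD 0 0 ≤ m₀ :=
      (Multiset.pairwise_sort _ _).sortedLE.getD_zero_le hm₀row
    exact hcorner.trans_lt (lt_of_le_of_ne (hmin s (Multiset.mem_toFinset.mp hsM)) hsm₀.symm)
  refine ⟨isSSYT_hookShape_iff.mpr
    ⟨?_, hcol, fun i j => hookTableau_eq_zero_of_hookShape_le hrow hleg⟩, ?_⟩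
  · rw [hookRow_hookTableau hrow]
    exact (Multiset.pairwise_sort _ _).sortedLE
  · rw [hookContent, hookRow_hookTableau hrow, hookLeg_hookTableau hleg, Multiset.sort_eq,
      sort_eq, tsub_add_cancel_of_le hSM]

lemma exists_hookTableau_eq (hmin : ∀ m ∈ M, m₀ ≤ m) (hk : k < Multiset.card M)
    {T : ℕ → ℕ → ℕ} (hT : IsSSYT (hookShape (Multiset.card M) k) T)
    (hc : hookContent (Multiset.card M) k T = M) :
    ∃ S ∈ powersetCard k (M.toFinset.erase m₀), hookTableau (M - S.val).sort S.sort = T := by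
  obtain ⟨hrow, hcol, hzero⟩ := isSSYT_hookShape_iff.mp hT
  rw [hookCol_eq_cons, List.sortedLT_iff_pairwise, List.pairwise_cons] at hcol
  obtain ⟨hcorner, hleg⟩ := hcol
  have hnodup : (hookLeg k T).Nodup := hleg.sortedLT.nodup
  have hcornerM : T 0 0 ∈ M := by
    rw [← hc, hookContent, Multiset.mem_add]
    exact Or.inl (List.mem_ofFn.mpr ⟨⟨0, by omega⟩, rfl⟩)
  refine ⟨(hookLeg k T).toFinset, mem_powersetCard.mpr ⟨fun s hs => ?_, ?_⟩, ?_⟩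
  · rw [List.mem_toFinset] at hs
    refine mem_erase.mpr ⟨(lt_of_le_of_lt (hmin _ hcornerM) (hcorner s hs)).ne', ?_⟩
    rw [Multiset.mem_toFinset, ← hc, hookContent, Multiset.mem_add]
    exact Or.inr hs
  · rw [List.toFinset_card_of_nodup hnodup, hookLeg, List.length_ofFn]
  · have hlegval : (hookLeg k T).toFinset.val = hookLeg k T := by
      rw [List.toFinset_val, hnodup.dedup]
    have hrow_eq : (M - (hookLeg k T).toFinset.val).sort = hookRow (Multiset.card M) k T := by
      refine List.Perm.eq_of_sortedLE (Multiset.pairwise_sort _ _).sortedLE hrow ?_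
      rw [← Multiset.coe_eq_coe, Multiset.sort_eq, hlegval]
      exact (eq_tsub_of_add_eq hc).symm
    rw [hrow_eq, (List.toFinset_sort _ hnodup).mpr hleg.sortedLT.sortedLE.pairwise,
      hookTableau_hookRow_hookLeg hzero]

theorem kostka_hookShape (M : Multiset ℕ) (hk : k < Multiset.card M) :
    kostka (hookShape (Multiset.card M) k) M.count = (M.toFinset.card - 1).choose k := by
  have hne : M.toFinset.Nonempty := by
    rw [Multiset.toFinset_nonempty, ← Multiset.card_pos]; omega
  set m₀ := M.toFinset.min' hne
  have hm₀ : m₀ ∈ M := Multiset.mem_toFinset.mp (min'_mem _ hne)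
  have hmin : ∀ m ∈ M, m₀ ≤ m := fun m hm => min'_le _ _ (Multiset.mem_toFinset.mpr hm)
  have htableaux : {T | IsSSYT (hookShape (Multiset.card M) k) T ∧
      ∀ m, {p : ℕ × ℕ | p.2 < hookShape (Multiset.card M) k p.1 ∧
        T p.1 p.2 = m}.ncard = M.count m} =
      (fun S : Finset ℕ => hookTableau (M - S.val).sort S.sort) ''
        ↑(powersetCard k (M.toFinset.erase m₀)) := by
    ext T
    simp only [ncard_hookShape_cells_eq_count, ← Multiset.ext, Set.mem_ofPred_eq, Set.mem_image,
      mem_coe]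
    constructor
    · rintro ⟨hT, hc⟩
      exact exists_hookTableau_eq hmin hk hT hc
    · rintro ⟨S, hS, rfl⟩
      exact isSSYT_hookTableau hm₀ hmin hS
  rw [kostka, htableaux, Set.InjOn.ncard_image, Set.ncard_coe_finset, card_powersetCard,
    card_erase_of_mem (min'_mem _ hne)]
  intro S₁ hS₁ S₂ hS₂ heq
  have hlen : ∀ S ∈ powersetCard k (M.toFinset.erase m₀), S.sort.length = k := fun S hS => by
    rw [length_sort, (mem_powersetCard.mp hS).2]
  have := congrArg (hookLeg k) heq
  simp only [hookLeg_hookTableau (hlen _ hS₁), hookLeg_hookTableau (hlen _ hS₂)] at this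
  simpa using congrArg List.toFinset this

end KostkaHook

section ExtendedContent

variable {n : ℕ}

lemma kostkaZ_extendSeq_eq_zero_of_neg (shape : ℕ → ℕ) {a : Fin n → ℤ} {i : Fin n}
    (hi : a i < 0) : kostkaZ shape (extendSeq a) = 0 := by
  rw [kostkaZ, if_neg]
  push Not
  exact ⟨i, by simpa [extendSeq] using hi⟩

theorem kostkaZ_hookShape_extendSeq {N k : ℕ} {a : Fin n → ℤ} (ha : ∀ i, 0 ≤ a i)
    (hN : ∑ i, a i = N) (hk : k < N) :
    kostkaZ (hookShape N k) (extendSeq a) = (#{i | a i ≠ 0} - 1).choose k := by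
  let M : Multiset ℕ := ∑ i, (a i).toNat • {(i : ℕ)}
  have hcount : M.count = fun m => (extendSeq a m).toNat := by
    funext m
    simp only [M, Multiset.count_sum', Multiset.count_nsmul, Multiset.count_singleton, extendSeq]
    split_ifs with hm
    · rw [sum_eq_single ⟨m, hm⟩
        (fun i _ hi => by rw [if_neg fun h => hi (Fin.ext h.symm), mul_zero]) (by simp)]
      simp
    · exact sum_eq_zero fun i _ => by simp [show m ≠ i by omega]
  have hcard : Multiset.card M = N := by
    have : ((∑ i, (a i).toNat : ℕ) : ℤ) = N := by
      simp only [Nat.cast_sum, Int.toNat_of_nonneg (ha _), hN]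
    simpa [M] using (Nat.cast_injective this : ∑ i, (a i).toNat = N)
  have hsupp : M.toFinset = (univ.filter (a · ≠ 0)).map Fin.valEmbedding := by
    ext m
    simp [M, Multiset.mem_sum, Int.toNat_eq_zero, (ha _).ge_iff_eq', eq_comm]
  rw [kostkaZ, if_pos, ← hcount, ← hcard, kostka_hookShape M (hcard ▸ hk), hsupp, card_map]
  intro m
  unfold extendSeq
  split_ifs
  exacts [ha _, le_rfl]

end ExtendedContent

section Hessenberg

variable {n : ℕ} {μ ν : Fin n → ℕ} {h : Fin n → Fin n}

/-- `μ_{h(i)} - ν_i + i - h(i) = 0`, the condition under which `h^J` lowers `h` at `i ∈ J`. -/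
abbrev IsTightAt (μ ν : Fin n → ℕ) (h : Fin n → Fin n) (i : Fin n) : Prop :=
  μ (h i) + (i : ℕ) = ν i + h i

lemma IsHessOf.le_iff (hh : IsHessOf μ ν h) (hμ : Antitone μ) (i j : Fin n) :
    ν j + (i : ℕ) ≤ μ i + j ↔ i ≤ h j := by
  refine ⟨(hh j).2 i, fun hij => ?_⟩
  have := (hh j).1
  have := hμ hij
  rw [Fin.le_def] at hij
  omega

lemma IsHessOf.eq_iff (hh : IsHessOf μ ν h) (hμ : Antitone μ) (i j : Fin n) :
    μ i + (j : ℕ) = ν j + i ↔ i = h j ∧ IsTightAt μ ν h j := by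
  refine ⟨fun he => ?_, fun ⟨hi, he⟩ => hi ▸ he⟩
  obtain rfl : i = h j := ((hh.le_iff hμ i j).mp he.ge).antisymm <| not_lt.mp fun hlt => by
    have := (hh j).1
    have := hμ hlt.le
    rw [Fin.lt_def] at hlt
    omega
  exact ⟨rfl, he⟩

lemma IsHessOf.lt_of_isTightAt (hh : IsHessOf μ ν h) (hlt : ∀ i, ν i < μ i) {i : Fin n}
    (hi : IsTightAt μ ν h i) : i < h i := by
  have := hlt i
  refine lt_of_le_of_ne ((hh i).2 i (by omega)) fun heq => ?_
  rw [IsTightAt, ← heq] at hi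
  omega

lemma le_hJfun_iff {J : Finset (Fin n)} {i x : Fin n}
    (hpos : IsTightAt μ ν h i → 0 < (h i : ℕ)) :
    x ≤ hJfun μ ν h J i ↔ x ≤ h i ∧ ¬(i ∈ J ∧ IsTightAt μ ν h i ∧ x = h i) := by
  unfold hJfun
  split_ifs with hJ
  · have := hpos hJ.2
    simp only [Fin.le_def, Fin.ext_iff, hJ, true_and]
    omega
  · tauto

lemma hatSeq_apply_apply (μ ν : Fin n → ℕ) (w : Perm (Fin n)) (j : Fin n) :
    hatSeq μ ν w (w j) = ((μ (w j) + j : ℕ) : ℤ) - ((ν j + w j : ℕ) : ℤ) := by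
  simp only [hatSeq, deltaSeq, Perm.inv_def, symm_apply_apply]
  push_cast
  ring

lemma hatSeq_apply_nonneg_iff (hh : IsHessOf μ ν h) (hμ : Antitone μ) (w : Perm (Fin n))
    (j : Fin n) : 0 ≤ hatSeq μ ν w (w j) ↔ w j ≤ h j := by
  rw [hatSeq_apply_apply, sub_nonneg, Nat.cast_le, ← hh.le_iff hμ, add_comm (ν j)]

lemma hatSeq_apply_eq_zero_iff (hh : IsHessOf μ ν h) (hμ : Antitone μ) (w : Perm (Fin n))
    (j : Fin n) : hatSeq μ ν w (w j) = 0 ↔ w j = h j ∧ IsTightAt μ ν h j := by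
  rw [hatSeq_apply_apply, sub_eq_zero, Nat.cast_inj, hh.eq_iff hμ]

lemma sum_hatSeq (hle : ∀ i, ν i ≤ μ i) (w : Perm (Fin n)) :
    ∑ i, hatSeq μ ν w i = ((∑ i, (μ i - ν i) : ℕ) : ℤ) := by
  simp only [hatSeq, sum_sub_distrib, Nat.cast_sum, Nat.cast_sub (hle _)]
  rw [Equiv.sum_comp w⁻¹ (fun i => (ν i : ℤ) + deltaSeq n i), sum_add_distrib,
    sum_add_distrib]
  ring

lemma card_hatSeq_ne_zero (hh : IsHessOf μ ν h) (hμ : Antitone μ) (w : Perm (Fin n)) :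
    #{i | hatSeq μ ν w i ≠ 0} = n - #{j | w j = h j ∧ IsTightAt μ ν h j} := by
  have hzero : #{j | w j = h j ∧ IsTightAt μ ν h j} = #{i | hatSeq μ ν w i = 0} :=
    card_equiv w fun j => by
      simp only [mem_filter, mem_univ, true_and, hatSeq_apply_eq_zero_iff hh hμ]
  have hsplit := card_filter_add_card_filter_not (s := univ) (fun i => hatSeq μ ν w i = 0)
  rw [card_univ, Fintype.card_fin] at hsplit
  simp only [ne_eq]
  omega

lemma filter_le_hJfun_eq_powersetCard (k : ℕ) {w : Perm (Fin n)} (hw : ∀ i, w i ≤ h i)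
    (hpos : ∀ i, IsTightAt μ ν h i → 0 < (h i : ℕ)) :
    univ.filter (fun J : Finset (Fin n) => (∀ i ∈ J, (i : ℕ) < n - 1) ∧ J.card = k ∧
        ∀ i, w i ≤ hJfun μ ν h J i) =
      powersetCard k (({i | (i : ℕ) < n - 1} : Finset (Fin n)) \
        ({j | w j = h j ∧ IsTightAt μ ν h j} : Finset (Fin n))) := by
  ext J
  simp only [mem_filter, mem_univ, true_and, mem_powersetCard, subset_iff, mem_sdiff,
    le_hJfun_iff (hpos _), hw]
  grind

end Hessenberg

theorem stmt5_general {n N k : ℕ} (μ ν : Fin n → ℕ) (hμ : Antitone μ)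
    (hlt : ∀ i, ν i < μ i) (hN : N = ∑ i : Fin n, (μ i - ν i)) (hk : k < N)
    (h : Fin n → Fin n) (hh : IsHessOf μ ν h) (w : Perm (Fin n)) :
    kostkaZ (hookShape N k) (extendSeq (hatSeq μ ν w)) =
      (Finset.univ.filter (fun J : Finset (Fin n) =>
        (∀ i ∈ J, (i : ℕ) < n - 1) ∧ J.card = k ∧
          ∀ i, w i ≤ hJfun μ ν h J i)).card := by
  have hpos : ∀ i, IsTightAt μ ν h i → 0 < (h i : ℕ) := fun i hi =>
    (Nat.zero_le _).trans_lt (hh.lt_of_isTightAt hlt hi)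
  by_cases hw : ∀ i, w i ≤ h i
  · have hnonneg : ∀ i, 0 ≤ hatSeq μ ν w i := fun i => by
      simpa using (hatSeq_apply_nonneg_iff hh hμ w (w⁻¹ i)).mpr (hw _)
    have htight : ({j | w j = h j ∧ IsTightAt μ ν h j} : Finset (Fin n)) ⊆
        ({i | (i : ℕ) < n - 1} : Finset (Fin n)) := fun j hj => by
      simp only [mem_filter, mem_univ, true_and] at hj ⊢
      have := Fin.lt_def.mp (hh.lt_of_isTightAt hlt hj.2)
      have := (h j).isLt
      omega
    rw [kostkaZ_hookShape_extendSeq hnonneg (hN ▸ sum_hatSeq (fun i => (hlt i).le) w) hk,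
      filter_le_hJfun_eq_powersetCard k hw hpos, card_powersetCard, card_sdiff_of_subset htight,
      Fin.card_filter_val_lt, card_hatSeq_ne_zero hh hμ]
    congr 1
    omega
  · push Not at hw
    obtain ⟨j, hj⟩ := hw
    have hneg : hatSeq μ ν w (w j) < 0 :=
      not_le.mp ((hatSeq_apply_nonneg_iff hh hμ w j).not.mpr hj.not_ge)
    rw [kostkaZ_extendSeq_eq_zero_of_neg _ hneg, eq_comm, card_eq_zero, filter_eq_empty_iff]
    rintro J - ⟨-, -, hJ⟩
    exact hj.not_ge ((le_hJfun_iff (hpos j)).mp (hJ j)).1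

/-- Theorem 4.2: for a skew shape with no empty rows, a hook
`θ = (N-k,1,...,1)` and any `w ∈ S_n`, the Kostka number `K_{θ, μ+δ-w(ν+δ)}`
equals the number of size-`k` subsets `J ⊆ [n-1]` with `w(i) ≤ h^J(i)` for all
`i`. -/
theorem stmt5 {n N k : ℕ} (μ ν : Fin n → ℕ) (hμ : Antitone μ) (hν : Antitone ν)
    (hlt : ∀ i, ν i < μ i) (hN : N = ∑ i : Fin n, (μ i - ν i)) (hk : k < N)
    (h : Fin n → Fin n) (hh : IsHessOf μ ν h) (w : Perm (Fin n)) :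
    kostkaZ (hookShape N k) (extendSeq (hatSeq μ ν w)) =
      (Finset.univ.filter (fun J : Finset (Fin n) =>
        (∀ i ∈ J, (i : ℕ) < n - 1) ∧ J.card = k ∧
          ∀ i, w i ≤ hJfun μ ν h J i)).card :=
  stmt5_general μ ν hμ hlt hN hk h hh w
end

section
/- Suppose μ/ν is a skew shape with μ_i = ν_i for some i ∈ [n], and let μ̂, ν̂ be μ, ν with the i-th components removed. Then for all partitions θ of N = |μ/ν| and all w ∈ S_n, Γ^θ_{μ/ν}(w) = Γ^θ_{μ̂/ν̂}(w), where both are computed as characters of S_n (padding μ̂/ν̂ with a zero row at the end). -/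
open Equiv

/-!
Reindex the sum over the conjugacy class by conjugating with the relabelling `e` that moves
row `i` to the bottom. If `w⁻¹` fixes `i` and maps `{s < i}` onto itself, the content
`μ̂ + δ - (e w e⁻¹)(ν̂ + δ)` is a rearrangement of `μ + δ - w(ν + δ)`: the entry `μ_i - ν_i = 0`
moves to the appended zero row, and in the rows past `i` the shift of `μ̂, ν̂` is absorbed by
`δ`. Kostka numbers are symmetric in the content, since the Bender–Knuth involution realises
each adjacent transposition of entries, so the two terms agree. Otherwise some `s ≥ i` has
`w⁻¹ s ≤ i`, `w⁻¹ s ≠ s`, and `μ_s ≤ μ_i = ν_i ≤ ν_{w⁻¹ s}` makes both contents negative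
somewhere, so both terms vanish.
-/

open Finset

theorem Finset.eq_Ico_of_Icc_subset {S : Finset ℕ} {p : ℕ} (hp : ∀ x ∈ S, p ≤ x)
    (hS : ∀ x ∈ S, Icc p x ⊆ S) : S = Ico p (p + #S) := by
  refine eq_of_subset_of_card_le (fun x hx => ?_) (by simp)
  have hcard := card_le_card (hS x hx)
  rw [Nat.card_Icc] at hcard
  have := hp x hx
  rw [mem_Ico]
  omega

namespace IsSSYT

variable {shape : ℕ → ℕ} {T : ℕ → ℕ → ℕ}

theorem row_mono (hT : IsSSYT shape T) {i j k : ℕ} (hjk : j ≤ k) (hk : k < shape i) :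
    T i j ≤ T i k := by
  induction k, hjk using Nat.le_induction with
  | base => rfl
  | succ k _ ih => exact (ih (by omega)).trans (hT.1 i k hk)

theorem lt_shape (hT : IsSSYT shape T) {i j : ℕ} (h : T i j ≠ 0) : j < shape i :=
  not_le.mp fun hj => h (hT.2.2 i j hj)

theorem col_lt (hT : IsSSYT shape T) {i j : ℕ} (hj : j < shape (i + 1)) : T i j < T (i + 1) j :=
  hT.2.1 i j hj

end IsSSYT

def cellsWithEntry (shape : ℕ → ℕ) (T : ℕ → ℕ → ℕ) (x : ℕ) : Set (ℕ × ℕ) :=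
  {c | c.2 < shape c.1 ∧ T c.1 c.2 = x}

namespace BenderKnuth

variable (shape : ℕ → ℕ) (m : ℕ) (T : ℕ → ℕ → ℕ)

def IsFreeLow (i j : ℕ) : Prop := j < shape i ∧ T i j = m ∧ T (i + 1) j ≠ m + 1

/-- In row `0` the last condition holds automatically, as `0 - 1 = 0` in `ℕ`. -/
def IsFreeHigh (i j : ℕ) : Prop := j < shape i ∧ T i j = m + 1 ∧ T (i - 1) j ≠ m

def IsFree (i j : ℕ) : Prop := IsFreeLow shape m T i j ∨ IsFreeHigh shape m T i j

open Classical in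
noncomputable def freeCells (i : ℕ) : Finset ℕ := (range (shape i)).filter (IsFree shape m T i)

open Classical in
noncomputable def lowCells (i : ℕ) : Finset ℕ := (range (shape i)).filter (IsFreeLow shape m T i)

open Classical in
noncomputable def highCells (i : ℕ) : Finset ℕ :=
  (range (shape i)).filter (IsFreeHigh shape m T i)

noncomputable def freeStart (i : ℕ) : ℕ :=
  if h : (freeCells shape m T i).Nonempty then (freeCells shape m T i).min' h else 0

open Classical in
/-- The Bender–Knuth involution: in each row the free entries `m^a (m+1)^b` become
`m^b (m+1)^a`. -/
noncomputable def bk (i j : ℕ) : ℕ :=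
  if IsFree shape m T i j then
    if j < freeStart shape m T i + #(highCells shape m T i) then m else m + 1
  else T i j

variable {shape m T} {i j : ℕ}

theorem mem_freeCells : j ∈ freeCells shape m T i ↔ IsFree shape m T i j := by
  simp only [freeCells, mem_filter, mem_range, and_iff_right_iff_imp]
  rintro (h | h) <;> exact h.1

theorem mem_lowCells : j ∈ lowCells shape m T i ↔ IsFreeLow shape m T i j := by
  simp only [lowCells, mem_filter, mem_range, and_iff_right_iff_imp]
  exact fun h => h.1

theorem mem_highCells : j ∈ highCells shape m T i ↔ IsFreeHigh shape m T i j := by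
  simp only [highCells, mem_filter, mem_range, and_iff_right_iff_imp]
  exact fun h => h.1

theorem IsFree.lt_shape (h : IsFree shape m T i j) : j < shape i := by
  rcases h with h | h <;> exact h.1

theorem IsFree.eq_or_eq (h : IsFree shape m T i j) : T i j = m ∨ T i j = m + 1 := by
  rcases h with h | h
  exacts [Or.inl h.2.1, Or.inr h.2.1]

theorem IsFree.isFreeLow_iff (h : IsFree shape m T i j) :
    IsFreeLow shape m T i j ↔ T i j = m :=
  ⟨fun h' => h'.2.1, fun hm => h.resolve_right fun h' => by have := h'.2.1; omega⟩

theorem IsFree.isFreeHigh (h : IsFree shape m T i j) (hm : T i j = m + 1) :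
    IsFreeHigh shape m T i j :=
  h.resolve_left fun h' => by have := h'.2.1; omega

theorem isFreeHigh_iff_isFree_and_not :
    IsFreeHigh shape m T i j ↔ IsFree shape m T i j ∧ ¬ IsFreeLow shape m T i j := by
  refine ⟨fun h => ⟨Or.inr h, fun h' => ?_⟩, fun ⟨h, h'⟩ => h.resolve_left h'⟩
  have := h.2.1
  have := h'.2.1
  omega

theorem card_freeCells (i : ℕ) :
    #(freeCells shape m T i) = #(lowCells shape m T i) + #(highCells shape m T i) := by
  have hunion : freeCells shape m T i = lowCells shape m T i ∪ highCells shape m T i := by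
    ext
    rw [mem_union, mem_freeCells, mem_lowCells, mem_highCells, IsFree]
  refine hunion ▸ card_union_of_disjoint (disjoint_left.mpr fun j hl hh => ?_)
  exact (isFreeHigh_iff_isFree_and_not.mp (mem_highCells.mp hh)).2 (mem_lowCells.mp hl)

theorem not_isFree_of_col (h : T i j = m ∧ T (i + 1) j = m + 1) :
    ¬ IsFree shape m T i j ∧ ¬ IsFree shape m T (i + 1) j := by
  constructor <;> rintro (h' | h') <;> have := h'.2.1
  · exact h'.2.2 h.2
  · omega
  · omega
  · exact h'.2.2 (by simpa using h.1)

theorem IsFree.not_isFree_succ (hT : IsSSYT shape T) (h : IsFree shape m T i j) :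
    ¬ IsFree shape m T (i + 1) j := fun h' => by
  have := hT.col_lt h'.lt_shape
  have := h.eq_or_eq
  have := h'.eq_or_eq
  exact (not_isFree_of_col ⟨by omega, by omega⟩).1 h

theorem IsFreeLow.lt_of_isFreeHigh {j' : ℕ} (hT : IsSSYT shape T)
    (hj : IsFreeLow shape m T i j) (hj' : IsFreeHigh shape m T i j') : j < j' := by
  by_contra! h
  have := hT.row_mono h hj.1
  have := hj.2.1
  have := hj'.2.1
  omega

theorem IsFree.isFreeLow_of_le {x : ℕ} (hT : IsSSYT shape T) (hj : IsFree shape m T i j)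
    (hjx : j ≤ x) (hx : x < shape i) (hTx : T i x = m) : IsFreeLow shape m T i x := by
  refine ⟨hx, hTx, fun hbelow => ?_⟩
  have hx' : x < shape (i + 1) := hT.lt_shape (by omega)
  have := hT.row_mono hjx hx
  have := hT.row_mono hjx hx'
  have := hT.col_lt (lt_of_le_of_lt hjx hx')
  have := hj.eq_or_eq
  exact (not_isFree_of_col ⟨by omega, by omega⟩).1 hj

theorem IsFree.isFreeHigh_of_le {x : ℕ} (hsh : Antitone shape) (hT : IsSSYT shape T)
    (hj : IsFree shape m T i j) (hxj : x ≤ j) (hTx : T i x = m + 1) :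
    IsFreeHigh shape m T i x := by
  have hjs := hj.lt_shape
  refine ⟨by omega, hTx, fun habove => ?_⟩
  rcases i with _ | k
  · simp [hTx] at habove
  rw [Nat.add_sub_cancel] at habove
  have := hT.row_mono hxj hjs
  have := hT.row_mono hxj (lt_of_lt_of_le hjs (hsh k.le_succ))
  have := hT.col_lt hjs
  have := hj.eq_or_eq
  exact (not_isFree_of_col ⟨by omega, by omega⟩).2 hj

theorem IsFree.of_le_of_le {j' x : ℕ} (hsh : Antitone shape) (hT : IsSSYT shape T)
    (hj : IsFree shape m T i j) (hj' : IsFree shape m T i j') (h₁ : j ≤ x) (h₂ : x ≤ j') :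
    IsFree shape m T i x := by
  have hx : x < shape i := lt_of_le_of_lt h₂ hj'.lt_shape
  have := hT.row_mono h₁ hx
  have := hT.row_mono h₂ hj'.lt_shape
  have := hj.eq_or_eq
  have := hj'.eq_or_eq
  obtain hTx | hTx : T i x = m ∨ T i x = m + 1 := by omega
  exacts [Or.inl (hj.isFreeLow_of_le hT h₁ hx hTx), Or.inr (hj'.isFreeHigh_of_le hsh hT h₂ hTx)]

theorem freeCells_eq_Ico (hsh : Antitone shape) (hT : IsSSYT shape T) (i : ℕ) :
    freeCells shape m T i =
      Ico (freeStart shape m T i) (freeStart shape m T i + #(freeCells shape m T i)) := by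
  refine eq_Ico_of_Icc_subset (fun x hx => ?_) (fun x hx y hy => ?_)
  · rw [freeStart, dif_pos ⟨x, hx⟩]
    exact min'_le _ _ hx
  · have hne : (freeCells shape m T i).Nonempty := ⟨x, hx⟩
    rw [freeStart, dif_pos hne, mem_Icc] at hy
    exact mem_freeCells.mpr ((mem_freeCells.mp (min'_mem _ hne)).of_le_of_le hsh hT
      (mem_freeCells.mp hx) hy.1 hy.2)

theorem isFree_iff_le_and_lt (hsh : Antitone shape) (hT : IsSSYT shape T) :
    IsFree shape m T i j ↔
      freeStart shape m T i ≤ j ∧ j < freeStart shape m T i + #(freeCells shape m T i) := by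
  rw [← mem_freeCells, ← mem_Ico, ← freeCells_eq_Ico hsh hT]

theorem lowCells_eq_Ico (hsh : Antitone shape) (hT : IsSSYT shape T) (i : ℕ) :
    lowCells shape m T i =
      Ico (freeStart shape m T i) (freeStart shape m T i + #(lowCells shape m T i)) := by
  have hlow : ∀ x ∈ lowCells shape m T i, freeStart shape m T i ≤ x ∧
      x < freeStart shape m T i + #(freeCells shape m T i) := fun x hx =>
    (isFree_iff_le_and_lt hsh hT).mp (Or.inl (mem_lowCells.mp hx))
  refine eq_Ico_of_Icc_subset (fun x hx => (hlow x hx).1) (fun x hx y hy => ?_)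
  have := hlow x hx
  rw [mem_Icc] at hy
  have hy' : IsFree shape m T i y := (isFree_iff_le_and_lt hsh hT).mpr ⟨hy.1, by omega⟩
  exact mem_lowCells.mpr (hy'.resolve_right fun h =>
    (((mem_lowCells.mp hx).lt_of_isFreeHigh hT h).trans_le hy.2).false)

theorem isFreeLow_iff_le_and_lt (hsh : Antitone shape) (hT : IsSSYT shape T) :
    IsFreeLow shape m T i j ↔
      freeStart shape m T i ≤ j ∧ j < freeStart shape m T i + #(lowCells shape m T i) := by
  rw [← mem_lowCells, ← mem_Ico, ← lowCells_eq_Ico hsh hT]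

theorem isFreeHigh_iff_le_and_lt (hsh : Antitone shape) (hT : IsSSYT shape T) :
    IsFreeHigh shape m T i j ↔ freeStart shape m T i + #(lowCells shape m T i) ≤ j ∧
      j < freeStart shape m T i + #(freeCells shape m T i) := by
  rw [isFreeHigh_iff_isFree_and_not, isFree_iff_le_and_lt hsh hT,
    isFreeLow_iff_le_and_lt hsh hT, card_freeCells]
  omega

theorem bk_of_isFree (h : IsFree shape m T i j) :
    bk shape m T i j = if j < freeStart shape m T i + #(highCells shape m T i) then m else m + 1 :=
  if_pos h

theorem bk_of_not_isFree (h : ¬ IsFree shape m T i j) : bk shape m T i j = T i j :=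
  if_neg h

theorem IsFree.bk_eq_or_eq (h : IsFree shape m T i j) :
    bk shape m T i j = m ∨ bk shape m T i j = m + 1 := by
  rw [bk_of_isFree h]
  split_ifs <;> simp

theorem IsFree.bk_eq_iff (h : IsFree shape m T i j) :
    bk shape m T i j = m ↔ j < freeStart shape m T i + #(highCells shape m T i) := by
  rw [bk_of_isFree h]
  split_ifs <;> simp_all

theorem bk_row_mono (hsh : Antitone shape) (hT : IsSSYT shape T) (i j : ℕ)
    (hj : j + 1 < shape i) : bk shape m T i j ≤ bk shape m T i (j + 1) := by
  have hrow := hT.1 i j hj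
  by_cases h₁ : IsFree shape m T i j <;> by_cases h₂ : IsFree shape m T i (j + 1)
  · rw [bk_of_isFree h₁, bk_of_isFree h₂]
    split_ifs <;> omega
  · have hne : T i (j + 1) ≠ m := fun hm => h₂ (Or.inl (h₁.isFreeLow_of_le hT j.le_succ hj hm))
    have := h₁.eq_or_eq
    rw [bk_of_not_isFree h₂]
    rcases h₁.bk_eq_or_eq with h | h <;> omega
  · have hne : T i j ≠ m + 1 := fun hm => h₁ (Or.inr (h₂.isFreeHigh_of_le hsh hT j.le_succ hm))
    have := h₂.eq_or_eq
    rw [bk_of_not_isFree h₁]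
    rcases h₂.bk_eq_or_eq with h | h <;> omega
  · rwa [bk_of_not_isFree h₁, bk_of_not_isFree h₂]

theorem bk_col_lt (hT : IsSSYT shape T) (i j : ℕ) (hj : j < shape (i + 1)) :
    bk shape m T i j < bk shape m T (i + 1) j := by
  have hcol := hT.col_lt hj
  by_cases h₁ : IsFree shape m T i j <;> by_cases h₂ : IsFree shape m T (i + 1) j
  · exact absurd h₂ (h₁.not_isFree_succ hT)
  · have := h₁.eq_or_eq
    have hne : T (i + 1) j ≠ m + 1 := fun h => (not_isFree_of_col ⟨by omega, h⟩).1 h₁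
    rw [bk_of_not_isFree h₂]
    rcases h₁.bk_eq_or_eq with h | h <;> omega
  · have := h₂.eq_or_eq
    have hne : T i j ≠ m := fun h => (not_isFree_of_col ⟨h, by omega⟩).2 h₂
    rw [bk_of_not_isFree h₁]
    rcases h₂.bk_eq_or_eq with h | h <;> omega
  · rwa [bk_of_not_isFree h₁, bk_of_not_isFree h₂]

theorem bk_isSSYT (hsh : Antitone shape) (hT : IsSSYT shape T) : IsSSYT shape (bk shape m T) :=
  ⟨bk_row_mono hsh hT, bk_col_lt hT, fun i j hj => by
    rw [bk_of_not_isFree fun h => (h.lt_shape.trans_le hj).false]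
    exact hT.2.2 i j hj⟩

theorem col_pair_bk_iff (hT : IsSSYT shape T) (i j : ℕ) :
    (bk shape m T i j = m ∧ bk shape m T (i + 1) j = m + 1) ↔
      (T i j = m ∧ T (i + 1) j = m + 1) := by
  refine ⟨fun ⟨h₁, h₂⟩ => ?_, fun h => ?_⟩
  · by_cases hf : IsFree shape m T i j
    · rw [bk_of_not_isFree (hf.not_isFree_succ hT)] at h₂
      have := hT.col_lt (j := j) (i := i) (hT.lt_shape (by omega))
      have := hf.eq_or_eq
      exact absurd hf (not_isFree_of_col ⟨by omega, h₂⟩).1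
    rw [bk_of_not_isFree hf] at h₁
    by_cases hf' : IsFree shape m T (i + 1) j
    · have := hT.col_lt hf'.lt_shape
      have := hf'.eq_or_eq
      exact absurd hf' (not_isFree_of_col ⟨h₁, by omega⟩).2
    rw [bk_of_not_isFree hf'] at h₂
    exact ⟨h₁, h₂⟩
  · have hnf := not_isFree_of_col (shape := shape) h
    rwa [bk_of_not_isFree hnf.1, bk_of_not_isFree hnf.2]

theorem isFree_bk_iff (hT : IsSSYT shape T) (i j : ℕ) :
    IsFree shape m (bk shape m T) i j ↔ IsFree shape m T i j := by
  have hpair := col_pair_bk_iff (m := m) hT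
  constructor
  · intro h
    by_contra hf
    have hbk := bk_of_not_isFree hf
    rw [IsFree, not_or] at hf
    rcases h with ⟨hs, hv, hnp⟩ | ⟨hs, hv, hnp⟩ <;> rw [hbk] at hv
    · exact hnp ((hpair i j).mpr ⟨hv, by_contra fun h => hf.1 ⟨hs, hv, h⟩⟩).2
    · rcases i with _ | k
      · exact hf.2 ⟨hs, hv, by simp [hv]⟩
      · exact hnp ((hpair k j).mpr ⟨by_contra fun h => hf.2 ⟨hs, hv, h⟩, hv⟩).1
  · intro h
    rcases h.bk_eq_or_eq with hv | hv
    · exact Or.inl ⟨h.lt_shape, hv, fun h' => (not_isFree_of_col ((hpair i j).mp ⟨hv, h'⟩)).1 h⟩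
    · refine Or.inr ⟨h.lt_shape, hv, fun h' => ?_⟩
      rcases i with _ | k
      · simp [hv] at h'
      · exact (not_isFree_of_col ((hpair k j).mp ⟨h', hv⟩)).2 h

theorem freeStart_bk (hT : IsSSYT shape T) (i : ℕ) :
    freeStart shape m (bk shape m T) i = freeStart shape m T i := by
  have : freeCells shape m (bk shape m T) i = freeCells shape m T i := by
    ext
    rw [mem_freeCells, mem_freeCells, isFree_bk_iff hT]
  simp only [freeStart, this]

theorem card_highCells_bk (hsh : Antitone shape) (hT : IsSSYT shape T) (i : ℕ) :
    #(highCells shape m (bk shape m T) i) = #(lowCells shape m T i) := by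
  have : highCells shape m (bk shape m T) i = Ico (freeStart shape m T i +
      #(highCells shape m T i)) (freeStart shape m T i + #(freeCells shape m T i)) := by
    ext x
    rw [mem_highCells, isFreeHigh_iff_isFree_and_not, isFree_bk_iff hT, mem_Ico]
    by_cases hx : IsFree shape m T i x
    · rw [((isFree_bk_iff hT i x).mpr hx).isFreeLow_iff, hx.bk_eq_iff]
      have := (isFree_iff_le_and_lt hsh hT).mp hx
      simp only [hx, true_and]
      omega
    · simp only [hx, false_and, false_iff, not_and]
      exact fun h₁ h₂ => hx ((isFree_iff_le_and_lt hsh hT).mpr ⟨by omega, h₂⟩)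
  rw [this, Nat.card_Ico, card_freeCells]
  omega

theorem bk_bk (hsh : Antitone shape) (hT : IsSSYT shape T) : bk shape m (bk shape m T) = T := by
  funext i j
  by_cases h : IsFree shape m T i j
  · have hlow := isFreeLow_iff_le_and_lt hsh hT (m := m) (i := i) (j := j)
    have := (isFree_iff_le_and_lt hsh hT).mp h
    rw [bk_of_isFree ((isFree_bk_iff hT i j).mpr h), freeStart_bk hT, card_highCells_bk hsh hT]
    split_ifs with hj
    · exact (h.isFreeLow_iff.mp (hlow.mpr ⟨this.1, hj⟩)).symm
    · exact (h.eq_or_eq.resolve_left fun hm => hj (hlow.mp (h.isFreeLow_iff.mpr hm)).2).symm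
  · rw [bk_of_not_isFree (mt (isFree_bk_iff hT i j).mp h), bk_of_not_isFree h]

theorem IsFree.isFreeHigh_add_iff (hsh : Antitone shape) (hT : IsSSYT shape T)
    (h : IsFree shape m T i j) :
    IsFreeHigh shape m T i (j + #(lowCells shape m T i)) ↔ bk shape m T i j = m := by
  have := (isFree_iff_le_and_lt hsh hT).mp h
  rw [isFreeHigh_iff_le_and_lt hsh hT, h.bk_eq_iff, card_freeCells]
  omega

theorem IsFreeHigh.exists_add (hsh : Antitone shape) (hT : IsSSYT shape T)
    (h : IsFreeHigh shape m T i j) : ∃ k, IsFree shape m T i k ∧ bk shape m T i k = m ∧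
      j = k + #(lowCells shape m T i) := by
  have hj := (isFreeHigh_iff_le_and_lt hsh hT).mp h
  have hk : IsFree shape m T i (j - #(lowCells shape m T i)) :=
    (isFree_iff_le_and_lt hsh hT).mpr ⟨by omega, by omega⟩
  refine ⟨_, hk, (hk.isFreeHigh_add_iff hsh hT).mp ?_, by omega⟩
  rwa [Nat.sub_add_cancel (by omega)]

open Classical in
variable (shape m T) in
/-- Free entries `m` of `bk T` move right onto the free entries `m + 1` of `T`; the
other entries `m` move down onto the `m + 1` below them. -/
noncomputable def partner (c : ℕ × ℕ) : ℕ × ℕ :=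
  if IsFree shape m T c.1 c.2 then (c.1, c.2 + #(lowCells shape m T c.1)) else (c.1 + 1, c.2)

theorem partner_of_isFree {c : ℕ × ℕ} (h : IsFree shape m T c.1 c.2) :
    partner shape m T c = (c.1, c.2 + #(lowCells shape m T c.1)) :=
  if_pos h

theorem partner_of_not_isFree {c : ℕ × ℕ} (h : ¬ IsFree shape m T c.1 c.2) :
    partner shape m T c = (c.1 + 1, c.2) :=
  if_neg h

theorem col_pair_of_not_isFree (hs : j < shape i) (h : ¬ IsFree shape m T i j)
    (hv : bk shape m T i j = m) : T i j = m ∧ T (i + 1) j = m + 1 := by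
  rw [bk_of_not_isFree h] at hv
  exact ⟨hv, by_contra fun h' => h (Or.inl ⟨hs, hv, h'⟩)⟩

theorem isFree_partner_iff (hsh : Antitone shape) (hT : IsSSYT shape T) {c : ℕ × ℕ}
    (hc : c ∈ cellsWithEntry shape (bk shape m T) m) :
    IsFree shape m T (partner shape m T c).1 (partner shape m T c).2 ↔
      IsFree shape m T c.1 c.2 := by
  by_cases h : IsFree shape m T c.1 c.2
  · rw [partner_of_isFree h]
    exact iff_of_true (Or.inr ((h.isFreeHigh_add_iff hsh hT).mpr hc.2)) h
  · rw [partner_of_not_isFree h]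
    exact iff_of_false (not_isFree_of_col (col_pair_of_not_isFree hc.1 h hc.2)).2 h

theorem bijOn_partner (hsh : Antitone shape) (hT : IsSSYT shape T) :
    Set.BijOn (partner shape m T) (cellsWithEntry shape (bk shape m T) m)
      (cellsWithEntry shape T (m + 1)) := by
  refine ⟨fun c hc => ?_, fun c hc c' hc' hcc' => ?_, fun c hc => ?_⟩
  · by_cases h : IsFree shape m T c.1 c.2
    · rw [partner_of_isFree h]
      have := (h.isFreeHigh_add_iff hsh hT).mpr hc.2
      exact ⟨this.1, this.2.1⟩
    · rw [partner_of_not_isFree h]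
      obtain ⟨-, hbelow⟩ := col_pair_of_not_isFree hc.1 h hc.2
      exact ⟨hT.lt_shape (i := c.1 + 1) (j := c.2) (by omega), hbelow⟩
  · have hfree := isFree_partner_iff hsh hT hc
    rw [hcc', isFree_partner_iff hsh hT hc'] at hfree
    by_cases h : IsFree shape m T c.1 c.2
    · rw [partner_of_isFree h, partner_of_isFree (hfree.mpr h), Prod.mk.injEq] at hcc'
      exact Prod.ext hcc'.1 (by rw [hcc'.1] at hcc'; omega)
    · rw [partner_of_not_isFree h, partner_of_not_isFree (mt hfree.mp h), Prod.mk.injEq] at hcc'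
      exact Prod.ext (by omega) hcc'.2
  · obtain ⟨i, j⟩ := c
    by_cases h : IsFree shape m T i j
    · obtain ⟨k, hk, hbk, rfl⟩ := (h.isFreeHigh hc.2).exists_add hsh hT
      exact ⟨(i, k), ⟨hk.lt_shape, hbk⟩, partner_of_isFree (c := (i, k)) hk⟩
    · obtain ⟨hs, hv⟩ := hc
      have habove : T (i - 1) j = m := by_contra fun h' => h (Or.inr ⟨hs, hv, h'⟩)
      obtain _ | k := i
      · simp [hv] at habove
      rw [Nat.add_sub_cancel] at habove
      have hnf := (not_isFree_of_col (shape := shape) ⟨habove, hv⟩).1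
      refine ⟨(k, j), ⟨hs.trans_le (hsh k.le_succ), ?_⟩, partner_of_not_isFree (c := (k, j)) hnf⟩
      rwa [bk_of_not_isFree hnf]

theorem ncard_cellsWithEntry_bk_swap (hsh : Antitone shape) (hT : IsSSYT shape T) (x : ℕ) :
    (cellsWithEntry shape (bk shape m T) x).ncard =
      (cellsWithEntry shape T (swap m (m + 1) x)).ncard := by
  rcases eq_or_ne x m with rfl | hxm
  · rw [swap_apply_left, (bijOn_partner hsh hT).ncard_eq]
  rcases eq_or_ne x (m + 1) with rfl | hxm'
  · rw [swap_apply_right]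
    conv_rhs => rw [← bk_bk hsh hT (m := m)]
    exact (bijOn_partner hsh (bk_isSSYT hsh hT)).ncard_eq.symm
  rw [swap_apply_of_ne_of_ne hxm hxm']
  congr 1
  ext ⟨i, j⟩
  refine and_congr_right fun _ => ?_
  by_cases h : IsFree shape m T i j
  · have := h.eq_or_eq
    have := h.bk_eq_or_eq
    simp only
    omega
  · rw [bk_of_not_isFree h]

end BenderKnuth

section ContentSymmetry

variable {shape : ℕ → ℕ}

open BenderKnuth in
theorem kostka_comp_swap (hsh : Antitone shape) (m : ℕ) (c : ℕ → ℕ) :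
    kostka shape (c ∘ swap m (m + 1)) = kostka shape c := by
  let tableaux : (ℕ → ℕ) → Set (ℕ → ℕ → ℕ) := fun c =>
    {T | IsSSYT shape T ∧ ∀ x, (cellsWithEntry shape T x).ncard = c x}
  have hmaps : ∀ c, Set.MapsTo (bk shape m) (tableaux c) (tableaux (c ∘ swap m (m + 1))) :=
    fun c T ⟨hT, hc⟩ => ⟨bk_isSSYT hsh hT, fun x => by
      rw [ncard_cellsWithEntry_bk_swap hsh hT, hc, Function.comp_apply]⟩
  have hback := hmaps (c ∘ swap m (m + 1))
  have hswap : (c ∘ swap m (m + 1)) ∘ swap m (m + 1) = c := by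
    funext x
    simp
  rw [hswap] at hback
  have hinv : Set.InvOn (bk shape m) (bk shape m) (tableaux c) (tableaux (c ∘ swap m (m + 1))) :=
    ⟨fun T hT => bk_bk hsh hT.1, fun T hT => bk_bk hsh hT.1⟩
  exact (hinv.bijOn (hmaps c) hback).ncard_eq.symm

theorem kostkaZ_comp_swap (hsh : Antitone shape) (m : ℕ) (c : ℕ → ℤ) :
    kostkaZ shape (c ∘ swap m (m + 1)) = kostkaZ shape c := by
  have hnonneg : (∀ x, 0 ≤ (c ∘ swap m (m + 1)) x) ↔ ∀ x, 0 ≤ c x :=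
    ⟨fun h x => by simpa using h (swap m (m + 1) x), fun h x => h _⟩
  by_cases h : ∀ x, 0 ≤ c x
  · rw [kostkaZ, kostkaZ, if_pos h, if_pos (hnonneg.mpr h)]
    exact kostka_comp_swap hsh m fun x => (c x).toNat
  · rw [kostkaZ, kostkaZ, if_neg h, if_neg (mt hnonneg.mp h)]

theorem extendSeq_comp_swap {N : ℕ} (a : Fin N → ℤ) (p q : Fin N) :
    extendSeq (a ∘ swap p q) = extendSeq a ∘ swap (p : ℕ) q := by
  funext x
  simp only [extendSeq, Function.comp_apply, swap_apply_def, Fin.ext_iff]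
  split_ifs <;> simp_all

theorem kostkaZ_extendSeq_comp_perm (hsh : Antitone shape) {N : ℕ} (a : Fin N → ℤ)
    (σ : Perm (Fin N)) : kostkaZ shape (extendSeq (a ∘ σ)) = kostkaZ shape (extendSeq a) := by
  rcases N with _ | n
  · rw [Subsingleton.elim σ 1, Perm.coe_one, Function.comp_id]
  have hσ : σ ∈ Submonoid.closure (Set.range fun k : Fin n => swap k.castSucc k.succ) := by
    rw [Perm.mclosure_swap_castSucc_succ]
    exact Submonoid.mem_top σ
  induction hσ using Submonoid.closure_induction generalizing a with
  | mem σ hσ =>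
    obtain ⟨k, rfl⟩ := hσ
    rw [extendSeq_comp_swap, Fin.val_castSucc, Fin.val_succ, kostkaZ_comp_swap hsh]
  | one => rfl
  | mul σ τ _ _ hσ hτ => rw [Perm.coe_mul, ← Function.comp_assoc, hτ, hσ]

end ContentSymmetry

theorem Equiv.Perm.apply_eq_self_and_lt_iff {α : Type*} [LinearOrder α] [Finite α] (σ : Perm α)
    {i : α} (h : ∀ s, i ≤ s → σ s ≤ i → σ s = s) : σ i = i ∧ ∀ s, σ s < i ↔ s < i := by
  have hmaps : Set.MapsTo σ (Set.Ici i) (Set.Ici i) := fun s (hs : i ≤ s) => by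
    by_contra hlt
    rw [Set.mem_Ici, not_le] at hlt
    exact hlt.not_ge (by rwa [h s hs hlt.le])
  have hbij := ((Set.toFinite _).injOn_iff_bijOn_of_mapsTo hmaps).mp σ.injective.injOn
  obtain ⟨t, ht, hti⟩ := hbij.surjOn Set.self_mem_Ici
  have hti' : t = i := (h t ht hti.le).symm.trans hti
  refine ⟨hti' ▸ hti, fun s => ⟨fun hs => ?_, fun hs => ?_⟩⟩
  · by_contra hge
    exact hs.not_ge (hmaps (not_lt.mp hge))
  · by_contra hge
    obtain ⟨t, ht, hts⟩ := hbij.surjOn (not_lt.mp hge : σ s ∈ Set.Ici i)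
    exact hs.not_ge (σ.injective hts ▸ ht)

section RowRemoval

variable {n : ℕ}

/-- The paper's `μ̂`: the entry `i` deleted and a `0` appended. -/
def removeRow (i : Fin (n + 1)) (f : Fin (n + 1) → ℕ) : Fin (n + 1) → ℕ :=
  fun j => if hj : (j : ℕ) < n then f (i.succAbove ⟨j, hj⟩) else 0

/-- The relabelling `i ↦ last`, `i.succAbove k ↦ k.castSucc` that moves row `i` to the bottom. -/
def rowToLast (i : Fin (n + 1)) : Perm (Fin (n + 1)) :=
  (finSuccEquiv' i).trans (finSuccEquiv' (Fin.last n)).symm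

theorem rowToLast_self (i : Fin (n + 1)) : rowToLast i i = Fin.last n := by
  simp [rowToLast]

theorem rowToLast_succAbove (i : Fin (n + 1)) (k : Fin n) :
    rowToLast i (i.succAbove k) = k.castSucc := by
  simp [rowToLast]

def shiftedSeq {N : ℕ} (f : Fin N → ℕ) : Fin N → ℤ := fun j => f j + deltaSeq N j

theorem hatSeq_apply {N : ℕ} (μ ν : Fin N → ℕ) (w : Perm (Fin N)) (s : Fin N) :
    hatSeq μ ν w s = shiftedSeq μ s - shiftedSeq ν (w⁻¹ s) :=
  rfl

theorem hatSeq_le {N : ℕ} {μ ν : Fin N → ℕ} {w : Perm (Fin N)} {s : Fin N}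
    (h : μ s ≤ ν (w⁻¹ s)) : hatSeq μ ν w s ≤ ((w⁻¹ s : ℕ) : ℤ) - (s : ℕ) := by
  simp only [hatSeq_apply, shiftedSeq, deltaSeq]
  omega

theorem shiftedSeq_removeRow_last (i : Fin (n + 1)) (f : Fin (n + 1) → ℕ) :
    shiftedSeq (removeRow i f) (Fin.last n) = 0 := by
  simp [shiftedSeq, removeRow, deltaSeq]

theorem shiftedSeq_removeRow_rowToLast {i s : Fin (n + 1)} (f : Fin (n + 1) → ℕ) (hs : s ≠ i) :
    shiftedSeq (removeRow i f) (rowToLast i s) = shiftedSeq f s + if i < s then 1 else 0 := by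
  obtain ⟨k, rfl⟩ := Fin.exists_succAbove_eq hs
  rw [rowToLast_succAbove]
  simp only [shiftedSeq, removeRow, deltaSeq, Fin.val_castSucc, k.isLt, dif_pos, Fin.eta]
  rcases lt_or_ge k.castSucc i with h | h
  · rw [Fin.succAbove_of_castSucc_lt _ _ h, if_neg (lt_asymm h), Fin.val_castSucc]
    ring
  · rw [Fin.succAbove_of_le_castSucc _ _ h, if_pos (h.trans_lt k.castSucc_lt_succ), Fin.val_succ]
    push_cast
    ring

theorem shiftedSeq_pos {N : ℕ} (f : Fin (N + 1) → ℕ) {s : Fin (N + 1)} (hs : s ≠ Fin.last N) :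
    0 < shiftedSeq f s := by
  have := Fin.val_lt_last hs
  simp only [shiftedSeq, deltaSeq]
  omega

end RowRemoval

theorem kostkaZ_extendSeq_of_neg (shape : ℕ → ℕ) {N : ℕ} {a : Fin N → ℤ} {s : Fin N}
    (hs : a s < 0) : kostkaZ shape (extendSeq a) = 0 := by
  rw [kostkaZ, if_neg]
  exact fun h => (h s).not_gt (by simpa [extendSeq] using hs)

theorem sum_conjClass_conj {N : ℕ} {M : Type*} [AddCommMonoid M] (w e : Perm (Fin N))
    (f : Perm (Fin N) → M) : ∑ v ∈ conjClass w, f (e * v * e⁻¹) = ∑ v ∈ conjClass w, f v := by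
  have hconj : ∀ v : Perm (Fin N), IsConj v (e * v * e⁻¹) := fun v => isConj_iff.mpr ⟨e, rfl⟩
  refine sum_equiv (MulAut.conj e).toEquiv (fun v => ?_) (fun v _ => rfl)
  simp only [conjClass, mem_filter, mem_univ, true_and]
  exact ⟨fun h => h.trans (hconj v), fun h => h.trans (hconj v).symm⟩

theorem hatSeq_conj_apply {N : ℕ} (μ ν : Fin N → ℕ) (e v : Perm (Fin N)) (s : Fin N) :
    hatSeq μ ν (e * v * e⁻¹) (e s) = shiftedSeq μ (e s) - shiftedSeq ν (e (v⁻¹ s)) := by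
  simp [hatSeq_apply, mul_inv_rev]

section RowRemovalConj

variable {n : ℕ} {μ ν : Fin (n + 1) → ℕ} {i : Fin (n + 1)} {v : Perm (Fin (n + 1))}

theorem hatSeq_removeRow_conj_comp (hi : μ i = ν i) (hfix : v⁻¹ i = i)
    (hlt : ∀ s, v⁻¹ s < i ↔ s < i) :
    hatSeq (removeRow i μ) (removeRow i ν) (rowToLast i * v * (rowToLast i)⁻¹) ∘ rowToLast i =
      hatSeq μ ν v := by
  funext s
  rw [Function.comp_apply, hatSeq_conj_apply, hatSeq_apply]
  by_cases hs : s = i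
  · subst hs
    rw [hfix, rowToLast_self, shiftedSeq_removeRow_last, shiftedSeq_removeRow_last, shiftedSeq,
      shiftedSeq, hi, sub_self, sub_self]
  · have hr : v⁻¹ s ≠ i := fun h => hs ((v⁻¹).injective (h.trans hfix.symm))
    have hup : i < s ↔ i < v⁻¹ s := by
      rw [← not_iff_not, not_lt, not_lt, le_iff_lt_or_eq, le_iff_lt_or_eq, or_iff_left hs,
        or_iff_left hr, hlt]
    rw [shiftedSeq_removeRow_rowToLast _ hs, shiftedSeq_removeRow_rowToLast _ hr]
    simp only [hup]
    ring

theorem hatSeq_neg (hμ : Antitone μ) (hν : Antitone ν) (hi : μ i ≤ ν i) {s : Fin (n + 1)}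
    (his : i ≤ s) (hsi : v⁻¹ s ≤ i) (hne : v⁻¹ s ≠ s) : hatSeq μ ν v s < 0 := by
  have := hatSeq_le (w := v) ((hμ his).trans (hi.trans (hν hsi)))
  have : (v⁻¹ s : ℕ) < s := Fin.lt_def.mp (lt_of_le_of_ne (hsi.trans his) hne)
  omega

theorem kostkaZ_hatSeq_removeRow_conj_eq_zero (shape : ℕ → ℕ) (hμ : Antitone μ)
    (hν : Antitone ν) (hi : μ i = ν i) {s : Fin (n + 1)} (his : i ≤ s) (hsi : v⁻¹ s ≤ i)
    (hne : v⁻¹ s ≠ s) : kostkaZ shape (extendSeq (hatSeq (removeRow i μ) (removeRow i ν)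
      (rowToLast i * v * (rowToLast i)⁻¹))) = 0 := by
  by_cases hfix : v⁻¹ i = i
  · have hs : s ≠ i := fun h => hne (h ▸ hfix)
    have hr : v⁻¹ s ≠ i := fun h => hs ((v⁻¹).injective (h.trans hfix.symm))
    refine kostkaZ_extendSeq_of_neg shape (s := rowToLast i s) ?_
    rw [hatSeq_conj_apply, shiftedSeq_removeRow_rowToLast _ hs,
      shiftedSeq_removeRow_rowToLast _ hr, if_pos (lt_of_le_of_ne his (Ne.symm hs)),
      if_neg (not_lt.mpr hsi)]
    have := hatSeq_le (w := v) ((hμ his).trans (hi.le.trans (hν hsi)))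
    rw [hatSeq_apply] at this
    have : (v⁻¹ s : ℕ) < i := Fin.lt_def.mp (lt_of_le_of_ne hsi hr)
    have : (i : ℕ) < s := Fin.lt_def.mp (lt_of_le_of_ne his (Ne.symm hs))
    omega
  · refine kostkaZ_extendSeq_of_neg shape (s := rowToLast i i) ?_
    rw [hatSeq_conj_apply, rowToLast_self, shiftedSeq_removeRow_last, zero_sub, neg_lt_zero]
    refine shiftedSeq_pos _ fun h => hfix ((rowToLast i).injective ?_)
    rw [h, rowToLast_self]

theorem kostkaZ_hatSeq_removeRow_conj {shape : ℕ → ℕ} (hsh : Antitone shape) (hμ : Antitone μ)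
    (hν : Antitone ν) (hi : μ i = ν i) (v : Perm (Fin (n + 1))) :
    kostkaZ shape (extendSeq (hatSeq (removeRow i μ) (removeRow i ν)
      (rowToLast i * v * (rowToLast i)⁻¹))) = kostkaZ shape (extendSeq (hatSeq μ ν v)) := by
  by_cases hblock : ∀ s, i ≤ s → v⁻¹ s ≤ i → v⁻¹ s = s
  · obtain ⟨hfix, hlt⟩ := (v⁻¹).apply_eq_self_and_lt_iff hblock
    rw [← kostkaZ_extendSeq_comp_perm hsh _ (rowToLast i), hatSeq_removeRow_conj_comp hi hfix hlt]
  · push Not at hblock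
    obtain ⟨s, his, hsi, hne⟩ := hblock
    rw [kostkaZ_hatSeq_removeRow_conj_eq_zero shape hμ hν hi his hsi hne,
      kostkaZ_extendSeq_of_neg shape (hatSeq_neg hμ hν hi.le his hsi hne)]

end RowRemovalConj

theorem stmt12_general {n : ℕ} (μ ν : Fin (n + 1) → ℕ) (hμ : Antitone μ) (hν : Antitone ν)
    (i : Fin (n + 1)) (hi : μ i = ν i)
    (μh νh : Fin (n + 1) → ℕ)
    (hμh : ∀ j : Fin (n + 1), μh j =
      if hj : (j : ℕ) < n then μ (i.succAbove ⟨(j : ℕ), hj⟩) else 0)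
    (hνh : ∀ j : Fin (n + 1), νh j =
      if hj : (j : ℕ) < n then ν (i.succAbove ⟨(j : ℕ), hj⟩) else 0)
    (shape : ℕ → ℕ) (hshape : Antitone shape) (w : Perm (Fin (n + 1))) :
    GammaTheta shape μ ν w = GammaTheta shape μh νh w := by
  obtain rfl : μh = removeRow i μ := funext hμh
  obtain rfl : νh = removeRow i ν := funext hνh
  unfold GammaTheta
  rw [← sum_conjClass_conj w (rowToLast i) fun v =>
    (kostkaZ shape (extendSeq (hatSeq (removeRow i μ) (removeRow i ν) v)) : ℚ)]
  simp only [kostkaZ_hatSeq_removeRow_conj hshape hμ hν hi]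

/-- Proposition A.2 / Proposition 3.1: if `μ_i = ν_i` then
the immanant characters of `μ/ν` and of `μ̂/ν̂` (the shape with the `i`-th row
removed and a zero row appended) agree, for every partition shape `θ`. -/
theorem stmt12 {n : ℕ} (μ ν : Fin (n + 1) → ℕ) (hμ : Antitone μ) (hν : Antitone ν)
    (hle : ∀ j, ν j ≤ μ j) (i : Fin (n + 1)) (hi : μ i = ν i)
    (μh νh : Fin (n + 1) → ℕ)
    (hμh : ∀ j : Fin (n + 1), μh j =
      if hj : (j : ℕ) < n then μ (i.succAbove ⟨(j : ℕ), hj⟩) else 0)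
    (hνh : ∀ j : Fin (n + 1), νh j =
      if hj : (j : ℕ) < n then ν (i.succAbove ⟨(j : ℕ), hj⟩) else 0)
    (shape : ℕ → ℕ) (hshape : Antitone shape) (w : Perm (Fin (n + 1))) :
    GammaTheta shape μ ν w = GammaTheta shape μh νh w :=
  stmt12_general μ ν hμ hν i hi μh νh hμh hνh shape hshape w
end
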